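/- Let C ⊆ R_max^d be a tropical cone defined by A·x ≤ B·x and g ∈ C with all coordinates finite. Then g is extreme of type t if and only if for every l ∈ {1,...,d} and every x ∈ T(g,C) ∩ {-∞,0}^d, x_l = -∞ implies x_t = -∞. -/

import Mathlib

open scoped Classical

noncomputable section

/-- The max-plus semiring `ℝ ∪ {-∞}`: addition is `max` (the lattice `⊔`),
multiplication is `+` (with `⊥ + x = ⊥`). -/
abbrev Rmax := WithBot ℝ

/-- Tropical "dot product" `a·x = max_i (a_i + x_i)`. -/
def dotp {d : ℕ} (a x : Fin d → Rmax) : Rmax := Finset.univ.sup fun i => a i + x i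

/-- A tropical (polyhedral) cone: closed under coordinatewise max and
tropical scalar multiplication (adding a scalar to every coordinate). -/
def IsTropCone {d : ℕ} (C : Set (Fin d → Rmax)) : Prop :=
  (∀ x ∈ C, ∀ y ∈ C, x ⊔ y ∈ C) ∧ (∀ x ∈ C, ∀ lam : Rmax, (fun i => lam + x i) ∈ C)

/-- `g` is extreme in `C`: `g ∈ C` and `g = v ⊔ w` with `v, w ∈ C` forces `g = v` or `g = w`. -/
def TropExtreme {ι : Type*} (C : Set (ι → Rmax)) (g : ι → Rmax) : Prop :=
  g ∈ C ∧ ∀ v ∈ C, ∀ w ∈ C, g = v ⊔ w → g = v ∨ g = w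

/-- `g` is extreme of type `t` in `C`: `g` is minimal in `{x ∈ C | x t = g t}`. -/
def ExtremeType {ι : Type*} (C : Set (ι → Rmax)) (g : ι → Rmax) (t : ι) : Prop :=
  g ∈ C ∧ ∀ x ∈ C, x ≤ g → x t = g t → x = g

/-- The tropical cone defined by the system of inequalities `A·x ≤ B·x`. -/
def coneOf {d n : ℕ} (A B : Fin n → Fin d → Rmax) : Set (Fin d → Rmax) :=
  { x | ∀ k, dotp (A k) x ≤ dotp (B k) x }

/-- `argmax(c·g) = {i | c_i + g_i = c·g}`. -/
def argmaxSet {d : ℕ} (c g : Fin d → Rmax) : Finset (Fin d) :=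
  Finset.univ.filter fun i => c i + g i = dotp c g

/-- The tangent cone of `{x | A·x ≤ B·x}` at `g`. -/
def tangentCone {d n : ℕ} (A B : Fin n → Fin d → Rmax) (g : Fin d → Rmax) :
    Set (Fin d → Rmax) :=
  { x | ∀ k, dotp (A k) g = dotp (B k) g →
      (argmaxSet (A k) g).sup x ≤ (argmaxSet (B k) g).sup x }

/-! If `g` were not minimal of type `t`, a point `x ≤ g` of the cone with `x t = g t` would
single out the set `{i | x i = g i}`; its `{-∞, 0}`-indicator lies in the tangent cone, contains
`t` and misses some `l`. Conversely, if such an indicator of a set `S ∋ t` lies in the tangent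
cone, lowering `g` by a small `ε > 0` outside `S` stays in the cone: a tight row either keeps a
right-hand maximiser in `S`, or its left side drops by the full `ε` while the right side drops by
at most `ε`; slack rows have room. The lowered point agrees with `g` at `t` and is strictly below
`g` off `S`, so `S` must be everything. -/

open Filter Topology

section Dotp

variable {d : ℕ}

lemma dotp_mono (c : Fin d → Rmax) {x y : Fin d → Rmax} (h : x ≤ y) :
    dotp c x ≤ dotp c y :=
  Finset.sup_mono_fun fun i _ => add_le_add_right (h i) _

lemma le_dotp (c x : Fin d → Rmax) (i : Fin d) : c i + x i ≤ dotp c x :=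
  Finset.le_sup (f := fun j => c j + x j) (Finset.mem_univ i)

lemma dotp_le_iff {c x : Fin d → Rmax} {m : Rmax} : dotp c x ≤ m ↔ ∀ i, c i + x i ≤ m := by
  simp [dotp, Finset.sup_le_iff]

lemma exists_eq_dotp [Nonempty (Fin d)] (c x : Fin d → Rmax) :
    ∃ i, dotp c x = c i + x i := by
  obtain ⟨i, -, h⟩ := Finset.exists_mem_eq_sup Finset.univ Finset.univ_nonempty
    fun i => c i + x i
  exact ⟨i, h⟩

lemma add_dotp (a : Rmax) (c x : Fin d → Rmax) : a + dotp c x = dotp c (fun i => a + x i) := by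
  rw [dotp, Finset.apply_sup_eq_sup_comp (a + ·) (fun _ _ => (max_add_add_left _ _ _).symm)
    (WithBot.add_bot a)]
  exact Finset.sup_congr rfl fun i _ => add_left_comm _ _ _

lemma mem_argmaxSet {c g : Fin d → Rmax} {i : Fin d} :
    i ∈ argmaxSet c g ↔ c i + g i = dotp c g := by
  simp [argmaxSet]

end Dotp

lemma Finset.sup_ite_zero_bot {ι : Type*} (s : Finset ι) (S : Set ι)
    [DecidablePred (· ∈ S)] :
    s.sup (fun i => if i ∈ S then (0 : Rmax) else ⊥) = if ∃ i ∈ s, i ∈ S then 0 else ⊥ := by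
  split_ifs with h
  · obtain ⟨i, hi, hiS⟩ := h
    refine le_antisymm (Finset.sup_le fun j _ => ?_) ?_
    · split_ifs <;> simp
    · simpa [hiS] using Finset.le_sup (f := fun i => if i ∈ S then (0 : Rmax) else ⊥) hi
  · simp only [not_exists, not_and] at h
    exact (Finset.sup_eq_bot_iff _ _).2 fun i hi => by simp [h i hi]

def IsTangentSupport {d n : ℕ} (A B : Fin n → Fin d → Rmax) (g : Fin d → Rmax)
    (S : Set (Fin d)) : Prop :=
  ∀ k, dotp (A k) g = dotp (B k) g →
    (∃ i ∈ argmaxSet (A k) g, i ∈ S) → ∃ j ∈ argmaxSet (B k) g, j ∈ S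

section TangentSupport

variable {d n : ℕ} {A B : Fin n → Fin d → Rmax} {g : Fin d → Rmax}

lemma ite_mem_tangentCone_iff {S : Set (Fin d)} [DecidablePred (· ∈ S)] :
    (fun i => if i ∈ S then (0 : Rmax) else ⊥) ∈ tangentCone A B g ↔
      IsTangentSupport A B g S := by
  refine forall₂_congr fun k _ => ?_
  rw [Finset.sup_ite_zero_bot, Finset.sup_ite_zero_bot]
  split_ifs <;> simp_all

lemma isTangentSupport_setOf_eq {x : Fin d → Rmax} (hx : x ∈ coneOf A B) (hxg : x ≤ g) :
    IsTangentSupport A B g {i | x i = g i} := by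
  rintro k hk ⟨i, hi, hxi⟩
  set m := dotp (A k) g
  rcases eq_or_ne m ⊥ with hbot | hm
  · have hB : dotp (B k) g = ⊥ := hk ▸ hbot
    exact ⟨i, mem_argmaxSet.2 ((le_bot_iff.1 (hB ▸ le_dotp _ _ _)).trans hB.symm), hxi⟩
  have : Nonempty (Fin d) := ⟨i⟩
  obtain ⟨j, hj⟩ := exists_eq_dotp (B k) x
  have hBx : dotp (B k) x = m := by
    refine le_antisymm (hk ▸ dotp_mono _ hxg) ?_
    calc m = A k i + x i := by rw [hxi, mem_argmaxSet.1 hi]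
      _ ≤ dotp (A k) x := le_dotp _ _ _
      _ ≤ dotp (B k) x := hx k
  have hjg : B k j + g j = m := by
    refine le_antisymm (hk ▸ le_dotp _ _ _) ?_
    calc m = B k j + x j := hBx.symm.trans hj
      _ ≤ B k j + g j := add_le_add_right (hxg j) _
  have hBj : B k j ≠ ⊥ := fun h => hm (by rw [← hjg, h, WithBot.bot_add])
  exact ⟨j, mem_argmaxSet.2 (hjg.trans hk),
    WithBot.add_left_cancel hBj (by rw [← hj, hBx, hjg])⟩

end TangentSupport

lemma eventually_le_neg_add {a b : Rmax} (h : a < b) :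
    ∀ᶠ ε in 𝓝[>] (0 : ℝ), a ≤ ((-ε : ℝ) : Rmax) + b := by
  induction b using WithBot.recBotCoe with
  | bot => exact absurd h not_lt_bot
  | coe b =>
    induction a using WithBot.recBotCoe with
    | bot => exact Eventually.of_forall fun _ => bot_le
    | coe a =>
      filter_upwards [Ioo_mem_nhdsGT (sub_pos.2 (WithBot.coe_lt_coe.1 h))] with ε hε
      exact_mod_cast (by linarith [hε.2] : a ≤ -ε + b)

def lowerOutside {d : ℕ} (S : Set (Fin d)) (ε : ℝ) (g : Fin d → Rmax) : Fin d → Rmax :=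
  fun i => if i ∈ S then g i else ((-ε : ℝ) : Rmax) + g i

section LowerOutside

variable {d : ℕ} {S : Set (Fin d)} {ε : ℝ} {g : Fin d → Rmax}

lemma lowerOutside_of_mem {i : Fin d} (hi : i ∈ S) : lowerOutside S ε g i = g i := if_pos hi

lemma lowerOutside_of_notMem {i : Fin d} (hi : i ∉ S) :
    lowerOutside S ε g i = ((-ε : ℝ) : Rmax) + g i := if_neg hi

lemma neg_add_le_lowerOutside (hε : 0 ≤ ε) (i : Fin d) :
    ((-ε : ℝ) : Rmax) + g i ≤ lowerOutside S ε g i := by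
  by_cases hi : i ∈ S
  · rw [lowerOutside_of_mem hi]
    exact add_le_of_nonpos_left (WithBot.coe_le_zero.2 (neg_nonpos.2 hε))
  · rw [lowerOutside_of_notMem hi]

lemma lowerOutside_le (hε : 0 ≤ ε) : lowerOutside S ε g ≤ g := fun i => by
  by_cases hi : i ∈ S
  · rw [lowerOutside_of_mem hi]
  · rw [lowerOutside_of_notMem hi]
    exact add_le_of_nonpos_left (WithBot.coe_le_zero.2 (neg_nonpos.2 hε))

lemma neg_add_dotp_le_dotp_lowerOutside (c : Fin d → Rmax) (hε : 0 ≤ ε) :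
    ((-ε : ℝ) : Rmax) + dotp c g ≤ dotp c (lowerOutside S ε g) := by
  rw [add_dotp]
  exact dotp_mono c (neg_add_le_lowerOutside hε)

lemma eventually_dotp_lowerOutside_le {c : Fin d → Rmax}
    (hS : ∀ i ∈ argmaxSet c g, i ∉ S) :
    ∀ᶠ ε in 𝓝[>] (0 : ℝ), dotp c (lowerOutside S ε g) ≤ ((-ε : ℝ) : Rmax) + dotp c g := by
  simp only [dotp_le_iff, eventually_all]
  intro i
  by_cases hi : i ∈ argmaxSet c g
  · refine Eventually.of_forall fun ε => le_of_eq ?_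
    rw [lowerOutside_of_notMem (hS i hi), add_left_comm, mem_argmaxSet.1 hi]
  · have hlt : c i + g i < dotp c g :=
      lt_of_le_of_ne (le_dotp c g i) fun h => hi (mem_argmaxSet.2 h)
    filter_upwards [eventually_le_neg_add hlt, eventually_mem_nhdsWithin] with ε hε hpos
    exact (add_le_add_right (lowerOutside_le (le_of_lt hpos) i) _).trans hε

end LowerOutside

lemma eventually_lowerOutside_mem_coneOf {d n : ℕ} {A B : Fin n → Fin d → Rmax}
    {g : Fin d → Rmax} {S : Set (Fin d)} (hg : g ∈ coneOf A B)
    (hS : IsTangentSupport A B g S) :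
    ∀ᶠ ε in 𝓝[>] (0 : ℝ), lowerOutside S ε g ∈ coneOf A B := by
  refine eventually_all.2 fun k => ?_
  rcases (hg k).lt_or_eq with hslack | htight
  · filter_upwards [eventually_le_neg_add hslack, eventually_mem_nhdsWithin]
      with ε hε (hpos : 0 < ε)
    calc dotp (A k) (lowerOutside S ε g) ≤ dotp (A k) g := dotp_mono _ (lowerOutside_le hpos.le)
      _ ≤ ((-ε : ℝ) : Rmax) + dotp (B k) g := hε
      _ ≤ dotp (B k) (lowerOutside S ε g) := neg_add_dotp_le_dotp_lowerOutside _ hpos.le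
  by_cases hA : ∃ i ∈ argmaxSet (A k) g, i ∈ S
  · obtain ⟨j, hj, hjS⟩ := hS k htight hA
    filter_upwards [eventually_mem_nhdsWithin] with ε (hpos : 0 < ε)
    calc dotp (A k) (lowerOutside S ε g) ≤ dotp (A k) g := dotp_mono _ (lowerOutside_le hpos.le)
      _ = B k j + lowerOutside S ε g j := by
        rw [htight, lowerOutside_of_mem hjS, mem_argmaxSet.1 hj]
      _ ≤ dotp (B k) (lowerOutside S ε g) := le_dotp _ _ _
  · simp only [not_exists, not_and] at hA
    filter_upwards [eventually_dotp_lowerOutside_le hA, eventually_mem_nhdsWithin]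
      with ε hε (hpos : 0 < ε)
    exact hε.trans (htight ▸ neg_add_dotp_le_dotp_lowerOutside _ hpos.le)

lemma ExtremeType.mem_of_isTangentSupport {d n : ℕ} {A B : Fin n → Fin d → Rmax}
    {g : Fin d → Rmax} {S : Set (Fin d)} {t : Fin d} (hext : ExtremeType (coneOf A B) g t)
    (hfin : ∀ i, g i ≠ ⊥) (hS : IsTangentSupport A B g S) (ht : t ∈ S) (l : Fin d) : l ∈ S := by
  obtain ⟨ε, hcone, hpos : 0 < ε⟩ :=
    ((eventually_lowerOutside_mem_coneOf hext.1 hS).and eventually_mem_nhdsWithin).exists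
  have hlow : lowerOutside S ε g = g :=
    hext.2 _ hcone (lowerOutside_le hpos.le) (lowerOutside_of_mem ht)
  by_contra hl
  have hgl := congrFun hlow l
  rw [lowerOutside_of_notMem hl] at hgl
  obtain ⟨r, hr⟩ := WithBot.ne_bot_iff_exists.1 (hfin l)
  rw [← hr, ← WithBot.coe_add, WithBot.coe_inj] at hgl
  linarith

/-- Prop.: `g` (all coordinates finite) is extreme of type `t` iff for every
`l` and every `{-∞,0}`-vector `x` in the tangent cone, `x l = -∞ → x t = -∞`. -/
theorem stmt8 {d n : ℕ} (A B : Fin n → Fin d → Rmax) (g' : Fin d → ℝ) (t : Fin d)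
    (hg : (fun i => ((g' i : ℝ) : Rmax)) ∈ coneOf A B) :
    ExtremeType (coneOf A B) (fun i => ((g' i : ℝ) : Rmax)) t ↔
      ∀ l : Fin d, ∀ x ∈ tangentCone A B (fun i => ((g' i : ℝ) : Rmax)),
        (∀ i, x i = ⊥ ∨ x i = 0) → x l = ⊥ → x t = ⊥ := by
  constructor
  · intro hext l x hxT hx hxl
    by_contra hxt
    have hx_eq : x = fun i => if i ∈ {i | x i = 0} then (0 : Rmax) else ⊥ :=
      funext fun i => by rcases hx i with h | h <;> simp [h]
    rw [hx_eq] at hxT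
    have hxl0 : x l = 0 := hext.mem_of_isTangentSupport (S := {i | x i = 0})
      (fun i => WithBot.coe_ne_bot) (ite_mem_tangentCone_iff.1 hxT) ((hx t).resolve_left hxt) l
    simp [hxl] at hxl0
  · refine fun H => ⟨hg, fun x hxC hxg hxt => funext fun l => ?_⟩
    by_contra hl
    have hxt_bot := H l _ (ite_mem_tangentCone_iff.2 (isTangentSupport_setOf_eq hxC hxg))
      (fun i => by split_ifs <;> simp) (if_neg hl)
    simp [hxt] at hxt_bot
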